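/- Let n be a natural number, α > 0 a real number, and v ∈ ℝ^n. Then, in the extended reals, the infimum over u in the nonnegative orthant of the supremum over λ in the nonnegative orthant of (α/2)‖u‖² + ⟨λ, v − u⟩ equals (α/2)‖v₊‖². (The primal value of the Resilient Feasible Learning inner problem for a fixed parameter θ with v = g(θ) − ε.) -/

import Mathlib

open scoped RealInnerProductSpace

/-- The positive part of a vector, taken componentwise. -/
noncomputable def posPart {n : ℕ} (v : EuclideanSpace ℝ (Fin n)) : EuclideanSpace ℝ (Fin n) :=
  WithLp.toLp 2 (fun i => max (v i) 0)

/-!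
For fixed `u ≥ 0` the inner supremum over `λ ≥ 0` is a penalty: it equals `(α/2)‖u‖²` when
`u ≥ v` (then `⟪λ, v - u⟫ ≤ 0`, with equality at `λ = 0`) and `⊤` otherwise (push `λ` to
infinity along a coordinate where `v i > u i`). The outer infimum is therefore the least value
of `(α/2)‖u‖²` over `u ≥ max v 0`, and `v₊` is the least such `u`, where the norm is smallest.
-/

section Orthant

variable {ι : Type*} [Fintype ι]

lemma inner_nonpos_of_nonneg_of_nonpos {l w : EuclideanSpace ℝ ι}
    (hl : ∀ i, 0 ≤ l i) (hw : ∀ i, w i ≤ 0) : ⟪l, w⟫ ≤ 0 := by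
  rw [PiLp.inner_apply]
  exact Finset.sum_nonpos fun i _ => mul_nonpos_of_nonpos_of_nonneg (hw i) (hl i)

lemma iSup_orthant_add_inner_eq_top [DecidableEq ι] (a : ℝ) {w : EuclideanSpace ℝ ι} {i : ι}
    (hi : 0 < w i) :
    ⨆ l : {l : EuclideanSpace ℝ ι // ∀ i, 0 ≤ l i}, ((a + ⟪l.1, w⟫ : ℝ) : EReal) = ⊤ := by
  refine (EReal.eq_top_iff_forall_lt _).2 fun M => ?_
  set t := (max (M - a) 0 + 1) / w i
  have ht : 0 ≤ t := by positivity
  have hl : ∀ j, 0 ≤ EuclideanSpace.single i t j := by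
    intro j
    rw [PiLp.single_apply]
    split_ifs <;> simp [ht]
  refine lt_of_lt_of_le ?_ (le_iSup_of_le ⟨EuclideanSpace.single i t, hl⟩ le_rfl)
  have hinner : ⟪EuclideanSpace.single i t, w⟫ = max (M - a) 0 + 1 := by
    rw [EuclideanSpace.inner_single_left, conj_trivial, div_mul_cancel₀ _ hi.ne']
  rw [EReal.coe_lt_coe_iff, hinner]
  linarith [le_max_left (M - a) 0]

lemma iSup_orthant_add_inner (a : ℝ) (w : EuclideanSpace ℝ ι) :
    ⨆ l : {l : EuclideanSpace ℝ ι // ∀ i, 0 ≤ l i}, ((a + ⟪l.1, w⟫ : ℝ) : EReal) =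
      if ∀ i, w i ≤ 0 then (a : EReal) else ⊤ := by
  classical
  split_ifs with hw
  · refine le_antisymm (iSup_le fun l => ?_) (le_iSup_of_le ⟨0, fun _ => le_rfl⟩ ?_)
    · exact EReal.coe_le_coe_iff.2 (by linarith [inner_nonpos_of_nonneg_of_nonpos l.2 hw])
    · simp
  · obtain ⟨i, hi⟩ := not_forall.1 hw
    rw [not_le] at hi
    exact iSup_orthant_add_inner_eq_top a hi

end Orthant

section PosPart

variable {n : ℕ}

lemma posPart_apply_nonneg (v : EuclideanSpace ℝ (Fin n)) (i : Fin n) : 0 ≤ posPart v i :=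
  le_max_right _ _

lemma le_posPart_apply (v : EuclideanSpace ℝ (Fin n)) (i : Fin n) : v i ≤ posPart v i :=
  le_max_left _ _

lemma posPart_apply_le {u v : EuclideanSpace ℝ (Fin n)} (hu : ∀ i, 0 ≤ u i) (hvu : ∀ i, v i ≤ u i)
    (i : Fin n) : posPart v i ≤ u i :=
  max_le (hvu i) (hu i)

lemma norm_posPart_le {u v : EuclideanSpace ℝ (Fin n)} (hu : ∀ i, 0 ≤ u i)
    (hvu : ∀ i, v i ≤ u i) : ‖posPart v‖ ≤ ‖u‖ := by
  refine (sq_le_sq₀ (norm_nonneg _) (norm_nonneg _)).1 ?_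
  rw [EuclideanSpace.real_norm_sq_eq, EuclideanSpace.real_norm_sq_eq]
  gcongr with i
  exacts [posPart_apply_nonneg v i, posPart_apply_le hu hvu i]

end PosPart

/-- Primal value of the Resilient Feasible Learning inner problem: in the extended reals,
the infimum over `u` in the nonnegative orthant of the supremum over `λ` in the nonnegative
orthant of `(α/2)‖u‖² + ⟪λ, v − u⟫` equals `(α/2)‖v₊‖²`. -/
theorem rfl_inner_primal_value (n : ℕ) (α : ℝ) (hα : 0 < α)
    (v : EuclideanSpace ℝ (Fin n)) :
    (⨅ u : {u : EuclideanSpace ℝ (Fin n) // ∀ i, 0 ≤ u i},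
      ⨆ l : {l : EuclideanSpace ℝ (Fin n) // ∀ i, 0 ≤ l i},
        ((α / 2 * ‖u.1‖ ^ 2 + ⟪l.1, v - u.1⟫ : ℝ) : EReal)) =
    ((α / 2 * ‖posPart v‖ ^ 2 : ℝ) : EReal) := by
  simp only [iSup_orthant_add_inner, PiLp.sub_apply, sub_nonpos]
  refine le_antisymm (iInf_le_of_le ⟨posPart v, posPart_apply_nonneg v⟩ ?_) (le_iInf fun u => ?_)
  · rw [if_pos (le_posPart_apply v)]
  · split_ifs with hvu
    · gcongr
      exact norm_posPart_le u.2 hvu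
    · exact le_top
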